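/- arXiv:math/0407352 — 2 statements merged into one kernel-verified Lean document; each statement's English description precedes it below -/
import Mathlib

section
/- Let (X, α) be a partial dynamical system with Δ₋₁ open. Then every closed subset Ṽ ⊆ X̃ is uniquely determined by its sections {Vₙ}_{n∈ℕ}: Ṽ = (V₀ × (V₁ ∪ {0}) × ... × (Vₙ ∪ {0}) × ...) ∩ X̃. -/
open Set

variable {X : Type*}

/-- `pdsDom α Δ n` is the domain `Δₙ` of the `n`-th iterate of the
partial map `α : Δ → X`. -/
def pdsDom (α : X → X) (Δ : Set X) : ℕ → Set X
  | 0 => Set.univ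
  | n + 1 => Δ ∩ α ⁻¹' pdsDom α Δ n

/-- The point `0` adjoined to `X`: we realize `X ∪ {0}` as `X ⊕ Unit`,
with `0 := Sum.inr ()`. -/
abbrev pdsZero (X : Type*) : X ⊕ Unit := Sum.inr ()

/-- The set `X_∞` of infinite anti-orbits of `(X, α)`, inside the
product `∏_{n ∈ ℕ} (X ∪ {0})`. -/
def XInf (α : X → X) (Δ : Set X) : Set (ℕ → X ⊕ Unit) :=
  {p | (∀ n, ∃ x, p n = Sum.inl x ∧ x ∈ pdsDom α Δ n) ∧
       (∀ n x, p (n + 1) = Sum.inl x → x ∈ Δ ∧ p n = Sum.inl (α x))}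

/-- The set `X_N` of anti-orbits of length exactly `N`: sequences
`(x₀, …, x_N, 0, 0, …)` with `xₙ ∈ Δₙ`, `α xₙ = x_{n-1}` and `x_N ∉ α(Δ)`. -/
def XN (α : X → X) (Δ : Set X) (N : ℕ) : Set (ℕ → X ⊕ Unit) :=
  {p | (∀ n ≤ N, ∃ x, p n = Sum.inl x ∧ x ∈ pdsDom α Δ n) ∧
       (∀ n, N < n → p n = pdsZero X) ∧
       (∀ n x, p (n + 1) = Sum.inl x → x ∈ Δ ∧ p n = Sum.inl (α x)) ∧
       (∀ x, p N = Sum.inl x → x ∉ α '' Δ)}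

/-- The `α`-extension `X̃ = ⋃_N X_N ∪ X_∞` of `X`. -/
def Xtilde (α : X → X) (Δ : Set X) : Set (ℕ → X ⊕ Unit) :=
  (⋃ N, XN α Δ N) ∪ XInf α Δ

/-- The map `α̃ : (x₀, x₁, …) ↦ (α x₀, x₀, x₁, …)` on sequences. -/
def tShift (α : X → X) : (ℕ → X ⊕ Unit) → (ℕ → X ⊕ Unit) :=
  fun p n => Nat.casesOn n (Sum.map α id (p 0)) fun k => p k

/-- The backwards shift `(x₀, x₁, x₂, …) ↦ (x₁, x₂, …)`. -/
def bShift : (ℕ → X ⊕ Unit) → (ℕ → X ⊕ Unit) := fun p n => p (n + 1)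

/-- The domain `Δ̃₁ = {x̃ ∈ X̃ : x₀ ∈ Δ₁}` of `α̃`. -/
def tDelta1 (α : X → X) (Δ : Set X) : Set (ℕ → X ⊕ Unit) :=
  {p | p ∈ Xtilde α Δ ∧ ∃ x ∈ Δ, p 0 = Sum.inl x}

/-- The image `Δ̃₋₁ = {x̃ ∈ X̃ : x₁ ≠ 0}` of `α̃`. -/
def tDeltaM1 (α : X → X) (Δ : Set X) : Set (ℕ → X ⊕ Unit) :=
  {p | p ∈ Xtilde α Δ ∧ p 1 ≠ pdsZero X}

/-- `V` is invariant under the partial map `α : Δ → X`: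
`αⁿ(V ∩ Δₙ) = V ∩ Δ₋ₙ` for all `n ∈ ℕ`. -/
def PdsInvariant (α : X → X) (Δ : Set X) (V : Set X) : Prop :=
  ∀ n : ℕ, α^[n] '' (V ∩ pdsDom α Δ n) = V ∩ α^[n] '' pdsDom α Δ n

/-- The set `Fₙ = {x ∈ Δₙ : αⁿ x = x}` of `n`-periodic points. -/
def pdsFix (α : X → X) (Δ : Set X) (n : ℕ) : Set X :=
  {x | x ∈ pdsDom α Δ n ∧ α^[n] x = x}

/-- Topological freedom of the partial map `α : Δ → X`: for every `n > 0`,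
every nonempty relatively open subset of `Fₙ` contains a point `x` with
`|α⁻ᵏ(x)| > 1` for some `1 ≤ k ≤ n`. -/
def TopFree [TopologicalSpace X] (α : X → X) (Δ : Set X) : Prop :=
  ∀ n : ℕ, 0 < n → ∀ W : Set X, IsOpen W → (W ∩ pdsFix α Δ n).Nonempty →
    ∃ x ∈ W ∩ pdsFix α Δ n, ∃ k, 1 ≤ k ∧ k ≤ n ∧
      ∃ y z, y ∈ pdsDom α Δ k ∧ z ∈ pdsDom α Δ k ∧
        α^[k] y = x ∧ α^[k] z = x ∧ y ≠ z

/-!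
Consecutive coordinates of a point of `X̃` satisfy `xₙ = α xₙ₊₁`, so two points with the same
nonzero `n`-th coordinate agree in all coordinates `≤ n`. A point of `X_N` is then equal to any
point of `Ṽ` with the same `N`-th coordinate, because `x_N ∉ α(Δ)` forces the zero tail; a point
of `X_∞` is the limit, in the product topology, of points of `Ṽ` agreeing with it up to `n`, and
so lies in the relatively closed set `Ṽ`.
-/

open Set Filter Topology

def IsAntiOrbit (α : X → X) (Δ : Set X) (p : ℕ → X ⊕ Unit) : Prop :=
  ∀ n x, p (n + 1) = Sum.inl x → x ∈ Δ ∧ p n = Sum.inl (α x)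

section AntiOrbit

variable {α : X → X} {Δ : Set X} {p q : ℕ → X ⊕ Unit}

lemma isAntiOrbit_of_mem_Xtilde (hp : p ∈ Xtilde α Δ) : IsAntiOrbit α Δ p := by
  rcases hp with hp | hp
  · obtain ⟨N, hN⟩ := mem_iUnion.1 hp
    exact hN.2.2.1
  · exact hp.2

namespace IsAntiOrbit

lemma apply_add_eq_inl (hp : IsAntiOrbit α Δ p) {k : ℕ} :
    ∀ {d : ℕ} {x : X}, p (k + d) = Sum.inl x → p k = Sum.inl (α^[d] x)
  | 0, _, h => h
  | d + 1, x, h => by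
    rw [Function.iterate_succ_apply]
    exact hp.apply_add_eq_inl (hp (k + d) x h).2

lemma apply_eq_inl_of_le (hp : IsAntiOrbit α Δ p) {n k : ℕ} {x : X}
    (hpn : p n = Sum.inl x) (hk : k ≤ n) : p k = Sum.inl (α^[n - k] x) :=
  hp.apply_add_eq_inl (d := n - k) (by rwa [Nat.add_sub_cancel' hk])

lemma apply_eq_of_le (hp : IsAntiOrbit α Δ p) (hq : IsAntiOrbit α Δ q) {n k : ℕ} {x : X}
    (hpn : p n = Sum.inl x) (hqn : q n = Sum.inl x) (hk : k ≤ n) : p k = q k := by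
  rw [hp.apply_eq_inl_of_le hpn hk, hq.apply_eq_inl_of_le hqn hk]

lemma apply_eq_zero_of_le (hp : IsAntiOrbit α Δ p) {m n : ℕ} (hm : p m = pdsZero X)
    (hmn : m ≤ n) : p n = pdsZero X := by
  rcases h : p n with x | ⟨⟩
  · simp [hp.apply_eq_inl_of_le h hmn] at hm
  · rfl

lemma eq_of_mem_XN (hq : IsAntiOrbit α Δ q) {N : ℕ} (hp : p ∈ XN α Δ N) (hpq : q N = p N) :
    q = p := by
  obtain ⟨x, hpx, -⟩ := hp.1 N le_rfl
  have hqx : q N = Sum.inl x := hpq.trans hpx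
  have hq_succ : q (N + 1) = pdsZero X := by
    rcases h : q (N + 1) with y | ⟨⟩
    · obtain ⟨hy, hqy⟩ := hq N y h
      exact absurd ⟨y, hy, Sum.inl_injective (hqy.symm.trans hqx)⟩ (hp.2.2.2 x hpx)
    · rfl
  funext k
  rcases le_or_gt k N with hk | hk
  · exact hq.apply_eq_of_le (isAntiOrbit_of_mem_Xtilde (Or.inl (mem_iUnion.2 ⟨N, hp⟩)))
      hqx hpx hk
  · rw [hp.2.1 k hk, hq.apply_eq_zero_of_le hq_succ hk]

lemma tendsto_of_apply_self_eq [TopologicalSpace X] (hp : IsAntiOrbit α Δ p)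
    {Q : ℕ → ℕ → X ⊕ Unit} (hQ : ∀ n, IsAntiOrbit α Δ (Q n)) {x : ℕ → X}
    (hpx : ∀ n, p n = Sum.inl (x n)) (hQx : ∀ n, Q n n = Sum.inl (x n)) :
    Tendsto Q atTop (𝓝 p) :=
  tendsto_pi_nhds.2 fun k => tendsto_const_nhds.congr' <| eventually_atTop.2
    ⟨k, fun n hn => hp.apply_eq_of_le (hQ n) (hpx n) (hQx n) hn⟩

end IsAntiOrbit

end AntiOrbit

theorem closed_subset_eq_of_sections_general {X : Type*} [TopologicalSpace X]
    (Δ : Set X) (α : X → X) (V : Set (ℕ → X ⊕ Unit)) (hV : V ⊆ Xtilde α Δ)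
    (hclosed : IsClosed (Subtype.val ⁻¹' V : Set ↥(Xtilde α Δ))) :
    V = {p | p ∈ Xtilde α Δ ∧
          ∀ n x, p n = Sum.inl x → x ∈ {w | ∃ q ∈ V, q n = Sum.inl w}} := by
  ext p
  refine ⟨fun hp => ⟨hV hp, fun n x h => ⟨p, hp, h⟩⟩, ?_⟩
  rintro ⟨hpX | hpInf, hsec⟩
  · obtain ⟨N, hN⟩ := mem_iUnion.1 hpX
    obtain ⟨x, hx, -⟩ := hN.1 N le_rfl
    obtain ⟨q, hqV, hq⟩ := hsec N x hx
    rwa [← (isAntiOrbit_of_mem_Xtilde (hV hqV)).eq_of_mem_XN hN (hq.trans hx.symm)]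
  · choose x hx using fun n => (hpInf.1 n).imp fun _ => And.left
    choose Q hQV hQx using fun n => hsec n (x n) (hx n)
    have hlim : Tendsto (fun n => (⟨Q n, hV (hQV n)⟩ : Xtilde α Δ)) atTop
        (𝓝 ⟨p, Or.inr hpInf⟩) :=
      tendsto_subtype_rng.2 <| IsAntiOrbit.tendsto_of_apply_self_eq hpInf.2
        (fun n => isAntiOrbit_of_mem_Xtilde (hV (hQV n))) hx hQx
    exact hclosed.mem_of_tendsto hlim (Eventually.of_forall hQV)

/-- If `Δ₋₁` is open, every closed subset `Ṽ ⊆ X̃` is uniquely determined by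
its sections `Vₙ = Φₙ(Ṽ ∩ Δ̃₋ₙ)`: `Ṽ = (V₀ × (V₁ ∪ {0}) × ⋯) ∩ X̃`. -/
theorem closed_subset_eq_of_sections {X : Type*} [TopologicalSpace X] [CompactSpace X]
    [T2Space X] (Δ : Set X) (hΔ : IsClopen Δ) (α : X → X) (hα : ContinuousOn α Δ)
    (hopen : IsOpen (α '' Δ)) (V : Set (ℕ → X ⊕ Unit)) (hV : V ⊆ Xtilde α Δ)
    (hclosed : IsClosed (Subtype.val ⁻¹' V : Set ↥(Xtilde α Δ))) :
    V = {p | p ∈ Xtilde α Δ ∧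
          ∀ n x, p n = Sum.inl x → x ∈ {w | ∃ q ∈ V, q n = Sum.inl w}} :=
  closed_subset_eq_of_sections_general Δ α V hV hclosed
end

section
/- A partial dynamical system (X, α) with Δ₋₁ open is minimal (has no closed α-invariant subsets other than ∅ and X) if and only if its reversible extension (X̃, α̃) is minimal. -/
open Set

variable {X : Type*}

/-!
Both directions compare closed invariant sets through the coordinates of anti-orbits.

If `X̃` is minimal and `V ⊆ X` is closed and invariant, the anti-orbits with all their points in
`V` form a closed invariant subset of `X̃`; it is empty or everything, and since every point of `V`
(resp. of `X`) starts such an anti-orbit (resp. some anti-orbit), `V` is `∅` or `X`.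

Conversely, a closed invariant `U ⊆ X̃` equals `X̃` as soon as every point of `X` starts an
element of `U`: a finite anti-orbit is an iterate of the one-point anti-orbit of its root, an
infinite one is a limit of iterates. If `X` is minimal, the points with backward orbits of every
length form a closed invariant set (Cantor's intersection theorem), so either `α` maps `Δ` onto
`X`, and then the starting points of elements of `U` form a closed invariant set; or some `Δₙ` is
empty, and then `X` is a single orbit segment issuing from its unique root.
-/

open Filter Topology

lemma Nat.exists_and_not_succ {P : ℕ → Prop} {n : ℕ} (h0 : P 0) (hn : ¬P n) :
    ∃ k, P k ∧ ¬P (k + 1) := by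
  by_contra! h
  exact hn (Nat.rec h0 h n)

lemma Sum.exists_eq_inl_of_ne_inr {a : X ⊕ Unit} (h : a ≠ Sum.inr ()) : ∃ x, a = Sum.inl x := by
  rcases a with x | ⟨⟩
  · exact ⟨x, rfl⟩
  · exact absurd rfl h

section PartialDynamics

variable {α : X → X} {Δ V : Set X} {m n : ℕ} {x y : X}

lemma mem_pdsDom_add : x ∈ pdsDom α Δ (m + n) ↔ x ∈ pdsDom α Δ m ∧ α^[m] x ∈ pdsDom α Δ n := by
  induction m generalizing x with
  | zero => simp [pdsDom]
  | succ m ih =>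
    rw [Nat.add_right_comm]
    simp only [pdsDom, mem_inter_iff, mem_preimage, ih, Function.iterate_succ_apply, and_assoc]

@[simp] lemma pdsDom_one : pdsDom α Δ 1 = Δ := by simp [pdsDom]

lemma pdsDom_univ (n : ℕ) : pdsDom α univ n = univ := by
  induction n with
  | zero => rfl
  | succ n ih => simp [pdsDom, ih]

lemma pdsDom_antitone : Antitone (pdsDom α Δ) := fun m n h x hx => by
  obtain ⟨k, rfl⟩ := Nat.exists_eq_add_of_le h
  exact (mem_pdsDom_add.1 hx).1

lemma iterate_mem_image_pdsDom_add (hy : y ∈ α^[n] '' pdsDom α Δ n) (hym : y ∈ pdsDom α Δ m) :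
    α^[m] y ∈ α^[n + m] '' pdsDom α Δ (n + m) := by
  obtain ⟨u, hu, rfl⟩ := hy
  exact ⟨u, mem_pdsDom_add.2 ⟨hu, hym⟩, by rw [add_comm, Function.iterate_add_apply]⟩

lemma image_pdsDom_antitone : Antitone fun n => α^[n] '' pdsDom α Δ n := by
  rintro m n h _ ⟨u, hu, rfl⟩
  obtain ⟨c, rfl⟩ := Nat.exists_eq_add_of_le h
  rw [add_comm] at hu
  exact ⟨α^[c] u, (mem_pdsDom_add.1 hu).2, by rw [← Function.iterate_add_apply, add_comm]⟩

lemma eq_of_iterate_eq_of_notMem_image (hx : x ∈ pdsDom α Δ n) (hy : y ∉ α '' Δ)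
    (h : α^[n] x = y) : x = y := by
  cases n with
  | zero => exact h
  | succ n =>
    have hxn : α^[n] x ∈ pdsDom α Δ 1 := (mem_pdsDom_add.1 hx).2
    exact absurd ⟨α^[n] x, hxn.1, (Function.iterate_succ_apply' α n x).symm.trans h⟩ hy

lemma PdsInvariant.iterate_mem (hV : PdsInvariant α Δ V) (hx : x ∈ V) (hxn : x ∈ pdsDom α Δ n) :
    α^[n] x ∈ V :=
  ((hV n).le ⟨x, ⟨hx, hxn⟩, rfl⟩).1

lemma PdsInvariant.exists_mem_iterate_eq (hV : PdsInvariant α Δ V) (hy : y ∈ V)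
    (hyn : y ∈ α^[n] '' pdsDom α Δ n) : ∃ x ∈ V, x ∈ pdsDom α Δ n ∧ α^[n] x = y := by
  obtain ⟨x, ⟨hx, hxn⟩, rfl⟩ := (hV n).ge ⟨hy, hyn⟩
  exact ⟨x, hx, hxn, rfl⟩

lemma pdsInvariant_of_forall (hf : ∀ n, ∀ x ∈ V, x ∈ pdsDom α Δ n → α^[n] x ∈ V)
    (hb : ∀ n, ∀ y ∈ V, y ∈ α^[n] '' pdsDom α Δ n → ∃ x ∈ V, x ∈ pdsDom α Δ n ∧ α^[n] x = y) :
    PdsInvariant α Δ V := by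
  refine fun n => Subset.antisymm ?_ ?_
  · rintro _ ⟨x, ⟨hx, hxn⟩, rfl⟩
    exact ⟨hf n x hx hxn, x, hxn, rfl⟩
  · rintro y ⟨hy, hyn⟩
    obtain ⟨x, hx, hxn, rfl⟩ := hb n y hy hyn
    exact ⟨x, ⟨hx, hxn⟩, rfl⟩

lemma image_inter_subset_of_pdsInvariant (hV : PdsInvariant α Δ V) :
    V ∩ α '' Δ ⊆ α '' (V ∩ Δ) := by
  rintro y ⟨hy, hyΔ⟩
  obtain ⟨x, hx, hxΔ, rfl⟩ := hV.exists_mem_iterate_eq (n := 1) hy (by simpa using hyΔ)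
  exact ⟨x, ⟨hx, by simpa using hxΔ⟩, rfl⟩

/-- `α^[d] z ∉ Δ` keeps forward orbits inside the segment, and the maximality of the depth `d` of
`α^[d] z` keeps backward orbits inside it. -/
lemma pdsInvariant_orbit_segment {z : X} {d : ℕ} (hz : z ∈ pdsDom α Δ d)
    (hend : α^[d] z ∉ Δ) (hdepth : α^[d] z ∉ α^[d + 1] '' pdsDom α Δ (d + 1)) :
    PdsInvariant α Δ ((fun j => α^[j] z) '' Iic d) := by
  have hzj : ∀ {j}, j ≤ d → α^[j] z ∈ pdsDom α Δ (d - j) := fun {j} hj =>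
    (mem_pdsDom_add.1 ((Nat.add_sub_cancel' hj).symm ▸ hz)).2
  refine pdsInvariant_of_forall ?_ ?_
  · rintro n _ ⟨j, hj, rfl⟩ hjn
    refine ⟨n + j, ?_, Function.iterate_add_apply α n j z⟩
    replace hj : j ≤ d := hj
    rw [mem_Iic]
    by_contra! hlt
    have : z ∈ pdsDom α Δ (d + 1) :=
      pdsDom_antitone (by omega) (mem_pdsDom_add.2 ⟨pdsDom_antitone hj hz, hjn⟩)
    exact hend (by simpa using (mem_pdsDom_add.1 this).2)
  · rintro n _ ⟨j, hj, rfl⟩ hjn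
    replace hj : j ≤ d := hj
    have hnj : n ≤ j := by
      by_contra! hlt
      have := iterate_mem_image_pdsDom_add hjn (hzj hj)
      rw [← Function.iterate_add_apply, Nat.sub_add_cancel hj] at this
      exact hdepth (image_pdsDom_antitone (by omega) this)
    refine ⟨α^[j - n] z, ⟨j - n, by simp only [mem_Iic]; omega, rfl⟩, ?_, ?_⟩
    · have : z ∈ pdsDom α Δ (j - n + n) := by
        rw [Nat.sub_add_cancel hnj]; exact pdsDom_antitone hj hz
      exact (mem_pdsDom_add.1 this).2
    · rw [← Function.iterate_add_apply, Nat.add_sub_cancel' hnj]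

end PartialDynamics

section Topology

variable [TopologicalSpace X] {α : X → X} {Δ : Set X}

lemma isClosed_pdsDom (hΔ : IsClosed Δ) (hα : ContinuousOn α Δ) (n : ℕ) :
    IsClosed (pdsDom α Δ n) := by
  induction n with
  | zero => exact isClosed_univ
  | succ n ih => exact hα.preimage_isClosed_of_isClosed hΔ ih

lemma continuousOn_iterate_pdsDom (hα : ContinuousOn α Δ) (n : ℕ) :
    ContinuousOn α^[n] (pdsDom α Δ n) := by
  induction n with
  | zero => exact continuousOn_id
  | succ n ih => exact ih.comp (hα.mono fun _ hx => hx.1) fun _ hx => hx.2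

variable [CompactSpace X]

lemma nonempty_iInter_of_antitone {K : ℕ → Set X} (hanti : Antitone K)
    (hne : ∀ n, (K n).Nonempty) (hcl : ∀ n, IsClosed (K n)) : (⋂ n, K n).Nonempty :=
  IsCompact.nonempty_iInter_of_sequence_nonempty_isCompact_isClosed K
    (fun n => hanti n.le_succ) hne (hcl 0).isCompact hcl

variable [T2Space X]

lemma isClosed_image_pdsDom (hΔ : IsClosed Δ) (hα : ContinuousOn α Δ) (n : ℕ) :
    IsClosed (α^[n] '' pdsDom α Δ n) :=
  ((isClosed_pdsDom hΔ hα n).isCompact.image_of_continuousOn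
    (continuousOn_iterate_pdsDom hα n)).isClosed

lemma iInter_image_pdsDom_nonempty (hΔ : IsClosed Δ) (hα : ContinuousOn α Δ)
    (hne : ∀ n, (pdsDom α Δ n).Nonempty) : (⋂ n, α^[n] '' pdsDom α Δ n).Nonempty :=
  nonempty_iInter_of_antitone image_pdsDom_antitone (fun n => (hne n).image _)
    (isClosed_image_pdsDom hΔ hα)

lemma pdsInvariant_iInter_image_pdsDom (hΔ : IsClosed Δ) (hα : ContinuousOn α Δ) :
    PdsInvariant α Δ (⋂ m, α^[m] '' pdsDom α Δ m) := by
  refine pdsInvariant_of_forall (fun n x hx hxn => mem_iInter.2 fun m => ?_) ?_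
  · exact image_pdsDom_antitone (m.le_add_right n)
      (iterate_mem_image_pdsDom_add (mem_iInter.1 hx m) hxn)
  · intro n y hy _
    set F := pdsDom α Δ n ∩ α^[n] ⁻¹' {y}
    have hF : IsClosed F := (continuousOn_iterate_pdsDom hα n).preimage_isClosed_of_isClosed
      (isClosed_pdsDom hΔ hα n) isClosed_singleton
    have hne : ∀ m, (F ∩ α^[m] '' pdsDom α Δ m).Nonempty := fun m => by
      obtain ⟨u, hu, rfl⟩ := mem_iInter.1 hy (m + n)
      obtain ⟨hum, hun⟩ := mem_pdsDom_add.1 hu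
      exact ⟨α^[m] u, ⟨hun, by simp [← Function.iterate_add_apply, add_comm]⟩, u, hum, rfl⟩
    obtain ⟨x, hx⟩ := nonempty_iInter_of_antitone
      (fun _ _ h => inter_subset_inter_right F (image_pdsDom_antitone h)) hne
      (fun m => hF.inter (isClosed_image_pdsDom hΔ hα m))
    have hx' := mem_iInter.1 hx
    exact ⟨x, mem_iInter.2 fun m => (hx' m).2, (hx' 0).1.1, (hx' 0).1.2⟩

end Topology

section Extension

variable {α : X → X} {Δ : Set X} {p q : ℕ → X ⊕ Unit} {m n k : ℕ} {x y : X}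

lemma mem_pdsDom_of_chain (hc : ∀ n x, p (n + 1) = Sum.inl x → x ∈ Δ ∧ p n = Sum.inl (α x))
    (h : p n = Sum.inl x) : x ∈ pdsDom α Δ n := by
  induction n generalizing x with
  | zero => trivial
  | succ n ih => exact ⟨(hc n x h).1, ih (hc n x h).2⟩

lemma eq_zero_of_chain (hc : ∀ n x, p (n + 1) = Sum.inl x → x ∈ Δ ∧ p n = Sum.inl (α x))
    (h : p m = pdsZero X) (hmn : m ≤ n) : p n = pdsZero X := by
  induction n, hmn using Nat.le_induction with
  | base => exact h
  | succ n _ ih =>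
    rcases hn : p (n + 1) with x | ⟨⟩
    · cases ih.symm.trans (hc n x hn).2
    · rfl

lemma exists_last_of_apply_eq_zero (h0 : p 0 = Sum.inl x) (hm : p m = pdsZero X) :
    ∃ k y, p k = Sum.inl y ∧ p (k + 1) = pdsZero X := by
  obtain ⟨k, hk, hk1⟩ := Nat.exists_and_not_succ (P := fun n => p n ≠ pdsZero X)
    (by simp [h0]) (not_not.2 hm)
  obtain ⟨y, hy⟩ := Sum.exists_eq_inl_of_ne_inr hk
  exact ⟨k, y, hy, not_not.1 hk1⟩

lemma mem_Xtilde_iff : p ∈ Xtilde α Δ ↔ (∃ x, p 0 = Sum.inl x) ∧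
    (∀ n x, p (n + 1) = Sum.inl x → x ∈ Δ ∧ p n = Sum.inl (α x)) ∧
    (∀ n x, p n = Sum.inl x → p (n + 1) = pdsZero X → x ∉ α '' Δ) := by
  constructor
  · rintro (hp | ⟨hdom, hc⟩)
    · obtain ⟨N, hdom, hzero, hc, hstop⟩ := mem_iUnion.1 hp
      refine ⟨(hdom 0 N.zero_le).imp fun x hx => hx.1, hc, fun n x hx hn1 => ?_⟩
      obtain rfl : n = N := by
        rcases lt_trichotomy n N with h | rfl | h
        · obtain ⟨y, hy, -⟩ := hdom (n + 1) h
          cases hn1.symm.trans hy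
        · rfl
        · cases (hzero n h).symm.trans hx
      exact hstop x hx
    · refine ⟨(hdom 0).imp fun x hx => hx.1, hc, fun n x _ hn1 => ?_⟩
      obtain ⟨y, hy, -⟩ := hdom (n + 1)
      cases hn1.symm.trans hy
  · rintro ⟨⟨x₀, h₀⟩, hc, hstop⟩
    by_cases hfin : ∃ m, p m = pdsZero X
    · obtain ⟨m, hm⟩ := hfin
      obtain ⟨N, x, hN, hN1⟩ := exists_last_of_apply_eq_zero h₀ hm
      refine Or.inl (mem_iUnion.2 ⟨N, fun n hn => ?_, fun n hn => eq_zero_of_chain hc hN1 hn,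
        hc, fun y hy => hstop N y hy hN1⟩)
      obtain ⟨y, hy⟩ := Sum.exists_eq_inl_of_ne_inr fun h => by
        cases hN.symm.trans (eq_zero_of_chain hc h hn)
      exact ⟨y, hy, mem_pdsDom_of_chain hc hy⟩
    · push Not at hfin
      refine Or.inr ⟨fun n => ?_, hc⟩
      obtain ⟨x, hx⟩ := Sum.exists_eq_inl_of_ne_inr (hfin n)
      exact ⟨x, hx, mem_pdsDom_of_chain hc hx⟩

lemma Xtilde.exists_head (hp : p ∈ Xtilde α Δ) : ∃ x, p 0 = Sum.inl x :=
  (mem_Xtilde_iff.1 hp).1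

lemma Xtilde.chain (hp : p ∈ Xtilde α Δ) (h : p (n + 1) = Sum.inl x) :
    x ∈ Δ ∧ p n = Sum.inl (α x) :=
  (mem_Xtilde_iff.1 hp).2.1 n x h

lemma Xtilde.notMem_image (hp : p ∈ Xtilde α Δ) (h : p n = Sum.inl x)
    (h1 : p (n + 1) = pdsZero X) : x ∉ α '' Δ :=
  (mem_Xtilde_iff.1 hp).2.2 n x h h1

lemma Xtilde.mem_pdsDom (hp : p ∈ Xtilde α Δ) (h : p n = Sum.inl x) : x ∈ pdsDom α Δ n :=
  mem_pdsDom_of_chain (mem_Xtilde_iff.1 hp).2.1 h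

lemma Xtilde.eq_zero_of_le (hp : p ∈ Xtilde α Δ) (h : p m = pdsZero X) (hmn : m ≤ n) :
    p n = pdsZero X :=
  eq_zero_of_chain (mem_Xtilde_iff.1 hp).2.1 h hmn

lemma Xtilde.exists_last (hp : p ∈ Xtilde α Δ) (hm : p m = pdsZero X) :
    ∃ k y, p k = Sum.inl y ∧ p (k + 1) = pdsZero X :=
  exists_last_of_apply_eq_zero (Xtilde.exists_head hp).choose_spec hm

lemma Xtilde.apply_eq_inl_iterate (hp : p ∈ Xtilde α Δ) (h : p (n + k) = Sum.inl x) :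
    p n = Sum.inl (α^[k] x) := by
  induction k generalizing x with
  | zero => exact h
  | succ k ih => exact ih (Xtilde.chain hp h).2

lemma Xtilde.exists_apply_eq_inl_of_image_eq_univ (hp : p ∈ Xtilde α Δ)
    (hsurj : α '' Δ = univ) (n : ℕ) : ∃ x, p n = Sum.inl x := by
  induction n with
  | zero => exact Xtilde.exists_head hp
  | succ n ih =>
    obtain ⟨w, hw⟩ := ih
    rcases hn : p (n + 1) with x | ⟨⟩
    · exact ⟨x, rfl⟩
    · exact absurd (hsurj ▸ mem_univ w) (Xtilde.notMem_image hp hw hn)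

@[simp] lemma tShift_apply_zero (p : ℕ → X ⊕ Unit) : tShift α p 0 = Sum.map α id (p 0) := rfl

@[simp] lemma tShift_apply_succ (p : ℕ → X ⊕ Unit) (n : ℕ) : tShift α p (n + 1) = p n := rfl

lemma tShift_iterate_apply_add (p : ℕ → X ⊕ Unit) (n k : ℕ) :
    (tShift α)^[n] p (n + k) = p k := by
  induction n generalizing p k with
  | zero => simp
  | succ n ih =>
    rw [Function.iterate_succ_apply, Nat.add_right_comm]
    exact ih (tShift α p) (k + 1)

lemma tShift_iterate_apply_of_le (h0 : p 0 = Sum.inl x) (hk : k ≤ n) :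
    (tShift α)^[n] p k = Sum.inl (α^[n - k] x) := by
  induction n generalizing k with
  | zero =>
    obtain rfl := Nat.le_zero.1 hk
    exact h0
  | succ n ih =>
    rw [Function.iterate_succ_apply']
    cases k with
    | zero => simp [ih n.zero_le, Function.iterate_succ_apply']
    | succ k => rw [tShift_apply_succ, ih (by omega), Nat.add_sub_add_right]

lemma bShift_iterate_apply (p : ℕ → X ⊕ Unit) (n k : ℕ) : bShift^[n] p k = p (n + k) := by
  induction n generalizing p with
  | zero => simp
  | succ n ih =>
    rw [Function.iterate_succ_apply, ih, Nat.add_right_comm]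
    rfl

lemma bShift_iterate_tShift_iterate (p : ℕ → X ⊕ Unit) (n : ℕ) :
    bShift^[n] ((tShift α)^[n] p) = p :=
  Function.LeftInverse.iterate (g := bShift) (f := tShift α) (fun _ => rfl) n p

lemma tShift_mem_Xtilde (hp : p ∈ Xtilde α Δ) (h0 : p 0 = Sum.inl x) (hx : x ∈ Δ) :
    tShift α p ∈ Xtilde α Δ := by
  refine mem_Xtilde_iff.2 ⟨⟨α x, by simp [h0]⟩, ?_, ?_⟩
  · rintro (_ | n) y hy
    · obtain rfl : x = y := Sum.inl_injective (h0.symm.trans hy)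
      exact ⟨hx, by simp [h0]⟩
    · exact Xtilde.chain (p := p) hp hy
  · rintro (_ | n) y hy hy1
    · cases hy1.symm.trans h0
    · exact Xtilde.notMem_image (p := p) hp hy hy1

lemma mem_tDom_iff (hp : p ∈ Xtilde α Δ) (h0 : p 0 = Sum.inl x) :
    p ∈ pdsDom (tShift α) (tDelta1 α Δ) n ↔ x ∈ pdsDom α Δ n := by
  induction n generalizing p x with
  | zero => exact iff_of_true trivial trivial
  | succ n ih =>
    have hΔ : p ∈ tDelta1 α Δ ↔ x ∈ Δ :=
      ⟨fun ⟨_, y, hy, hy0⟩ => by rwa [Sum.inl_injective (h0.symm.trans hy0)],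
        fun hx => ⟨hp, x, hx, h0⟩⟩
    change p ∈ tDelta1 α Δ ∧ tShift α p ∈ pdsDom (tShift α) (tDelta1 α Δ) n ↔
      x ∈ Δ ∧ α x ∈ pdsDom α Δ n
    rw [hΔ]
    exact and_congr_right fun hx => ih (tShift_mem_Xtilde hp h0 hx) (by simp [h0])

lemma tShift_iterate_mem_Xtilde (hp : p ∈ Xtilde α Δ) (h0 : p 0 = Sum.inl x)
    (hx : x ∈ pdsDom α Δ n) : (tShift α)^[n] p ∈ Xtilde α Δ := by
  induction n generalizing p x with
  | zero => exact hp
  | succ n ih => exact ih (tShift_mem_Xtilde hp h0 hx.1) (by simp [h0]) hx.2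

lemma tShift_iterate_apply_eq_of_le (hp : p ∈ Xtilde α Δ) (hpn : p n = Sum.inl x)
    (hq0 : q 0 = Sum.inl x) (hk : k ≤ n) : (tShift α)^[n] q k = p k := by
  rw [tShift_iterate_apply_of_le hq0 hk]
  exact (Xtilde.apply_eq_inl_iterate hp (by rwa [Nat.add_sub_cancel' hk])).symm

lemma tShift_iterate_eq (hp : p ∈ Xtilde α Δ) (hpn : p n = Sum.inl x) (hq0 : q 0 = Sum.inl x)
    (htail : ∀ j, q (j + 1) = p (n + (j + 1))) : (tShift α)^[n] q = p := by
  funext k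
  rcases le_or_gt k n with hk | hk
  · exact tShift_iterate_apply_eq_of_le hp hpn hq0 hk
  · obtain ⟨j, rfl⟩ := Nat.exists_eq_add_of_lt hk
    exact (tShift_iterate_apply_add q n (j + 1)).trans (htail j)

lemma bShift_iterate_mem_Xtilde (hp : p ∈ Xtilde α Δ) (h : p n = Sum.inl y) :
    bShift^[n] p ∈ Xtilde α Δ := by
  refine mem_Xtilde_iff.2 ⟨⟨y, by rwa [bShift_iterate_apply]⟩, fun m z hz => ?_,
    fun m z hz hz1 => ?_⟩
  · rw [bShift_iterate_apply] at hz ⊢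
    exact Xtilde.chain hp hz
  · rw [bShift_iterate_apply] at hz hz1
    exact Xtilde.notMem_image hp hz hz1

lemma tShift_iterate_bShift_iterate (hp : p ∈ Xtilde α Δ) (h : p n = Sum.inl y) :
    (tShift α)^[n] (bShift^[n] p) = p :=
  tShift_iterate_eq hp h (by rwa [bShift_iterate_apply]) fun j => bShift_iterate_apply p n (j + 1)

end Extension

def headSet (U : Set (ℕ → X ⊕ Unit)) : Set X := {x | ∃ q ∈ U, q 0 = Sum.inl x}

section InvariantSubsets

variable {α : X → X} {Δ : Set X} {U : Set (ℕ → X ⊕ Unit)} {p q : ℕ → X ⊕ Unit} {n k : ℕ}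
  {x y : X}

lemma tShift_iterate_mem (hU : PdsInvariant (tShift α) (tDelta1 α Δ) U) (hsub : U ⊆ Xtilde α Δ)
    (hq : q ∈ U) (h0 : q 0 = Sum.inl x) (hx : x ∈ pdsDom α Δ n) : (tShift α)^[n] q ∈ U :=
  hU.iterate_mem hq ((mem_tDom_iff (hsub hq) h0).2 hx)

lemma bShift_iterate_mem (hU : PdsInvariant (tShift α) (tDelta1 α Δ) U) (hsub : U ⊆ Xtilde α Δ)
    (hq : q ∈ U) (h : q n = Sum.inl y) : bShift^[n] q ∈ U := by
  have hqX := hsub hq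
  have hb0 : bShift^[n] q 0 = Sum.inl y := by rwa [bShift_iterate_apply]
  obtain ⟨p, hp, -, hpq⟩ := hU.exists_mem_iterate_eq hq
    ⟨bShift^[n] q, (mem_tDom_iff (bShift_iterate_mem_Xtilde hqX h) hb0).2
      (Xtilde.mem_pdsDom hqX h), tShift_iterate_bShift_iterate hqX h⟩
  rwa [← hpq, bShift_iterate_tShift_iterate]

lemma iterate_mem_headSet (hU : PdsInvariant (tShift α) (tDelta1 α Δ) U)
    (hsub : U ⊆ Xtilde α Δ) (hx : x ∈ headSet U) (hxn : x ∈ pdsDom α Δ n) :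
    α^[n] x ∈ headSet U := by
  obtain ⟨q, hq, h0⟩ := hx
  exact ⟨_, tShift_iterate_mem hU hsub hq h0 hxn,
    by rw [tShift_iterate_apply_of_le h0 n.zero_le, Nat.sub_zero]⟩

lemma mem_headSet_of_apply_eq_inl (hU : PdsInvariant (tShift α) (tDelta1 α Δ) U)
    (hsub : U ⊆ Xtilde α Δ) (hq : q ∈ U) (h : q n = Sum.inl y) : y ∈ headSet U :=
  ⟨_, bShift_iterate_mem hU hsub hq h, by rwa [bShift_iterate_apply]⟩

lemma mem_of_apply_succ_eq_zero (hU : PdsInvariant (tShift α) (tDelta1 α Δ) U)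
    (hsub : U ⊆ Xtilde α Δ) (hp : p ∈ Xtilde α Δ) (hk : p k = Sum.inl x)
    (hk1 : p (k + 1) = pdsZero X) (hx : x ∈ headSet U) : p ∈ U := by
  obtain ⟨q, hq, h0⟩ := hx
  have hq1 : q 1 = pdsZero X := by
    rcases hw1 : q 1 with w | ⟨⟩
    · obtain ⟨hw, hqw⟩ := Xtilde.chain (n := 0) (hsub hq) hw1
      exact absurd ⟨w, hw, Sum.inl_injective (hqw.symm.trans h0)⟩ (Xtilde.notMem_image hp hk hk1)
    · rfl
  rw [← tShift_iterate_eq hp hk h0 fun j => ?_]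
  · exact tShift_iterate_mem hU hsub hq h0 (Xtilde.mem_pdsDom hp hk)
  · rw [Xtilde.eq_zero_of_le (hsub hq) hq1 (by omega), Xtilde.eq_zero_of_le hp hk1 (by omega)]

lemma pdsInvariant_headSet (hU : PdsInvariant (tShift α) (tDelta1 α Δ) U)
    (hsub : U ⊆ Xtilde α Δ) (hsurj : α '' Δ = univ) : PdsInvariant α Δ (headSet U) := by
  refine pdsInvariant_of_forall (fun n x hx hxn => iterate_mem_headSet hU hsub hx hxn) ?_
  rintro n y ⟨q, hq, h0⟩ -
  obtain ⟨v, hv⟩ := Xtilde.exists_apply_eq_inl_of_image_eq_univ (hsub hq) hsurj n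
  refine ⟨v, mem_headSet_of_apply_eq_inl hU hsub hq hv, Xtilde.mem_pdsDom (hsub hq) hv, ?_⟩
  have := Xtilde.apply_eq_inl_iterate (n := 0) (hsub hq) (by rwa [zero_add])
  exact Sum.inl_injective (this.symm.trans h0)

variable [TopologicalSpace X]

lemma mem_of_forall_apply_eq_inl (hU : PdsInvariant (tShift α) (tDelta1 α Δ) U)
    (hsub : U ⊆ Xtilde α Δ) (hclosed : IsClosed (Subtype.val ⁻¹' U : Set (Xtilde α Δ)))
    (hp : p ∈ Xtilde α Δ) (hinl : ∀ n, ∃ x, p n = Sum.inl x)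
    (hhead : ∀ n x, p n = Sum.inl x → x ∈ headSet U) : p ∈ U := by
  choose x hx using hinl
  choose q hq hq0 using fun n => hhead n (x n) (hx n)
  have hrU : ∀ n, (tShift α)^[n] (q n) ∈ U := fun n =>
    tShift_iterate_mem hU hsub (hq n) (hq0 n) (Xtilde.mem_pdsDom hp (hx n))
  have hlim : Tendsto (fun n => (tShift α)^[n] (q n)) atTop (𝓝 p) :=
    tendsto_pi_nhds.2 fun k => tendsto_atTop_of_eventually_const (i₀ := k) fun n hn =>
      tShift_iterate_apply_eq_of_le hp (hx n) (hq0 n) hn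
  exact hclosed.mem_of_tendsto (x := ⟨p, hp⟩) (f := fun n => ⟨_, hsub (hrU n)⟩)
    (tendsto_subtype_rng.2 hlim) (Eventually.of_forall hrU)

lemma eq_Xtilde_of_headSet_eq_univ (hU : PdsInvariant (tShift α) (tDelta1 α Δ) U)
    (hsub : U ⊆ Xtilde α Δ) (hclosed : IsClosed (Subtype.val ⁻¹' U : Set (Xtilde α Δ)))
    (h : headSet U = univ) : U = Xtilde α Δ := by
  refine hsub.antisymm fun p hp => ?_
  by_cases hfin : ∃ m, p m = pdsZero X
  · obtain ⟨m, hm⟩ := hfin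
    obtain ⟨k, x, hk, hk1⟩ := Xtilde.exists_last hp hm
    exact mem_of_apply_succ_eq_zero hU hsub hp hk hk1 (h ▸ mem_univ x)
  · push Not at hfin
    exact mem_of_forall_apply_eq_inl hU hsub hclosed hp
      (fun n => Sum.exists_eq_inl_of_ne_inr (hfin n)) fun _ x _ => h ▸ mem_univ x

end InvariantSubsets

section ExtensionTopology

variable [TopologicalSpace X] {α : X → X} {Δ V : Set X}

lemma isClosed_setOf_forall_eq_inl_mem (hV : IsClosed V) :
    IsClosed {p : ℕ → X ⊕ Unit | ∀ n x, p n = Sum.inl x → x ∈ V} := by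
  have hS : IsClosed {a : X ⊕ Unit | ∀ x, a = Sum.inl x → x ∈ V} := by
    have : {a : X ⊕ Unit | ∀ x, a = Sum.inl x → x ∈ V}ᶜ = Sum.inl '' Vᶜ := by
      ext (x | ⟨⟩) <;> simp
    exact isOpen_compl_iff.1 (this ▸ isOpenMap_inl _ hV.isOpen_compl)
  rw [ofPred_forall]
  exact isClosed_iInter fun n => (hS.preimage (continuous_apply (A := fun _ => X ⊕ Unit) n) :)

lemma isClosed_setOf_stop (hopen : IsOpen (α '' Δ)) :
    IsClosed {p : ℕ → X ⊕ Unit |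
      ∀ n x, p n = Sum.inl x → p (n + 1) = pdsZero X → x ∉ α '' Δ} := by
  have hS : IsClosed {ab : (X ⊕ Unit) × (X ⊕ Unit) |
      ∀ x, ab.1 = Sum.inl x → ab.2 = pdsZero X → x ∉ α '' Δ} := by
    have : {ab : (X ⊕ Unit) × (X ⊕ Unit) |
        ∀ x, ab.1 = Sum.inl x → ab.2 = pdsZero X → x ∉ α '' Δ} =
        ((Sum.inl '' (α '' Δ)) ×ˢ range (Sum.inr : Unit → X ⊕ Unit))ᶜ := by
      ext ⟨a | _, b | _⟩ <;> simp
    rw [this]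
    exact ((isOpenMap_inl _ hopen).prod isOpen_range_inr).isClosed_compl
  rw [ofPred_forall]
  exact isClosed_iInter fun n =>
    (hS.preimage ((continuous_apply (A := fun _ => X ⊕ Unit) n).prodMk (continuous_apply (A := fun _ => X ⊕ Unit) (n + 1))) :)

variable [CompactSpace X] [T2Space X]

lemma isClosed_setOf_chain (hΔ : IsClosed Δ) (hα : ContinuousOn α Δ) :
    IsClosed {p : ℕ → X ⊕ Unit |
      ∀ n x, p (n + 1) = Sum.inl x → x ∈ Δ ∧ p n = Sum.inl (α x)} := by
  have hS : IsClosed {ab : (X ⊕ Unit) × (X ⊕ Unit) |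
      ∀ x, ab.2 = Sum.inl x → x ∈ Δ ∧ ab.1 = Sum.inl (α x)} := by
    have : {ab : (X ⊕ Unit) × (X ⊕ Unit) | ∀ x, ab.2 = Sum.inl x → x ∈ Δ ∧ ab.1 = Sum.inl (α x)} =
        Prod.snd ⁻¹' range Sum.inr ∪ (fun x => (Sum.inl (α x), Sum.inl x)) '' Δ := by
      ext ⟨a, x | _⟩ <;> simp [eq_comm]
    rw [this]
    exact (isClosed_range_inr.preimage continuous_snd).union
      (hΔ.isCompact.image_of_continuousOn ((continuous_inl.comp_continuousOn hα).prodMk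
        continuous_inl.continuousOn)).isClosed
  rw [ofPred_forall]
  exact isClosed_iInter fun n =>
    (hS.preimage ((continuous_apply (A := fun _ => X ⊕ Unit) n).prodMk (continuous_apply (A := fun _ => X ⊕ Unit) (n + 1))) :)

lemma isClosed_Xtilde (hΔ : IsClosed Δ) (hα : ContinuousOn α Δ) (hopen : IsOpen (α '' Δ)) :
    IsClosed (Xtilde α Δ) := by
  have h0 : IsClosed {p : ℕ → X ⊕ Unit | ∃ x, p 0 = Sum.inl x} := by
    convert isClosed_range_inl.preimage (continuous_apply (A := fun _ => X ⊕ Unit) 0) using 1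
    ext p
    simp [eq_comm]
  have : Xtilde α Δ = {p | ∃ x, p 0 = Sum.inl x} ∩
      {p | ∀ n x, p (n + 1) = Sum.inl x → x ∈ Δ ∧ p n = Sum.inl (α x)} ∩
      {p | ∀ n x, p n = Sum.inl x → p (n + 1) = pdsZero X → x ∉ α '' Δ} := by
    ext p
    exact mem_Xtilde_iff.trans and_assoc.symm
  rw [this]
  exact (h0.inter (isClosed_setOf_chain hΔ hα)).inter (isClosed_setOf_stop hopen)

lemma isClosed_headSet {U : Set (ℕ → X ⊕ Unit)} (hX : IsClosed (Xtilde α Δ))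
    (hsub : U ⊆ Xtilde α Δ) (hclosed : IsClosed (Subtype.val ⁻¹' U : Set (Xtilde α Δ))) :
    IsClosed (headSet U) := by
  have hU : IsClosed U := by
    simpa [inter_eq_right.2 hsub] using hX.isClosedEmbedding_subtypeVal.isClosedMap _ hclosed
  exact (hU.isCompact.image (continuous_apply (A := fun _ => X ⊕ Unit) 0)).isClosed.preimage continuous_inl

end ExtensionTopology

def liftSet (α : X → X) (Δ V : Set X) : Set (ℕ → X ⊕ Unit) :=
  {p | p ∈ Xtilde α Δ ∧ ∀ n x, p n = Sum.inl x → x ∈ V}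

section Lift

variable {α : X → X} {Δ V : Set X} {x : X}

lemma isClosed_liftSet [TopologicalSpace X] (hV : IsClosed V) :
    IsClosed (Subtype.val ⁻¹' liftSet α Δ V : Set (Xtilde α Δ)) := by
  convert (isClosed_setOf_forall_eq_inl_mem hV).preimage continuous_subtype_val using 1
  ext ⟨p, hp⟩
  exact and_iff_right hp

lemma pdsInvariant_liftSet (hV : PdsInvariant α Δ V) :
    PdsInvariant (tShift α) (tDelta1 α Δ) (liftSet α Δ V) := by
  refine pdsInvariant_of_forall ?_ ?_
  · rintro n p ⟨hp, hpV⟩ hpn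
    obtain ⟨x, h0⟩ := Xtilde.exists_head hp
    have hx := (mem_tDom_iff hp h0).1 hpn
    refine ⟨tShift_iterate_mem_Xtilde hp h0 hx, fun k y hy => ?_⟩
    rcases le_or_gt k n with hk | hk
    · rw [tShift_iterate_apply_of_le h0 hk, Sum.inl.injEq] at hy
      exact hy ▸ hV.iterate_mem (hpV 0 x h0) (pdsDom_antitone (n.sub_le k) hx)
    · obtain ⟨j, rfl⟩ := Nat.exists_eq_add_of_lt hk
      exact hpV _ y ((tShift_iterate_apply_add p n (j + 1)).symm.trans hy)
  · rintro n q ⟨hq, hqV⟩ ⟨p, hpn, rfl⟩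
    refine ⟨p, ⟨?_, fun k y hy => hqV (n + k) y ((tShift_iterate_apply_add p n k).trans hy)⟩,
      hpn, rfl⟩
    cases n with
    | zero => exact hq
    | succ n => exact hpn.1.1

/-- Choosing a preimage inside `V` for as long as one exists builds an anti-orbit in `V`. -/
lemma exists_mem_liftSet (hV : V ∩ α '' Δ ⊆ α '' (V ∩ Δ)) (hx : x ∈ V) :
    ∃ p ∈ liftSet α Δ V, p 0 = Sum.inl x := by
  have : ∀ y ∈ V, ∃ a : X ⊕ Unit, (∀ w, a = Sum.inl w → w ∈ V ∧ w ∈ Δ ∧ α w = y) ∧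
      (a = pdsZero X → y ∉ α '' Δ) := by
    intro y hy
    by_cases hyΔ : y ∈ α '' Δ
    · obtain ⟨w, ⟨hwV, hwΔ⟩, rfl⟩ := hV ⟨hy, hyΔ⟩
      exact ⟨Sum.inl w, fun w' hw' => Sum.inl_injective hw' ▸ ⟨hwV, hwΔ, rfl⟩,
        fun h => (Sum.inl_ne_inr h).elim⟩
    · exact ⟨pdsZero X, fun w h => (Sum.inr_ne_inl h).elim, fun _ => hyΔ⟩
  choose! pre hpre hpre0 using this
  let step : X ⊕ Unit → X ⊕ Unit := Sum.elim pre fun _ => pdsZero X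
  let p : ℕ → X ⊕ Unit := fun n => step^[n] (Sum.inl x)
  have hsucc : ∀ n, p (n + 1) = step (p n) := fun n => Function.iterate_succ_apply' _ _ _
  have hpre' : ∀ n y z, p n = Sum.inl z → p (n + 1) = Sum.inl y → z ∈ V →
      y ∈ V ∧ y ∈ Δ ∧ α y = z := fun n y z hz hy hzV =>
    hpre z hzV y (by rwa [hsucc, hz] at hy)
  have hpV : ∀ n y, p n = Sum.inl y → y ∈ V := by
    intro n
    induction n with
    | zero => exact fun y hy => Sum.inl_injective hy ▸ hx
    | succ n ih =>
      intro y hy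
      rcases hpn : p n with z | ⟨⟩
      · exact (hpre' n y z hpn hy (ih z hpn)).1
      · rw [hsucc, hpn] at hy
        cases hy
  refine ⟨p, ⟨mem_Xtilde_iff.2 ⟨⟨x, rfl⟩, fun n y hy => ?_, fun n y hy hy1 => ?_⟩, hpV⟩, rfl⟩
  · rcases hpn : p n with z | ⟨⟩
    · obtain ⟨-, hyΔ, rfl⟩ := hpre' n y z hpn hy (hpV n z hpn)
      exact ⟨hyΔ, rfl⟩
    · rw [hsucc, hpn] at hy
      cases hy
  · rw [hsucc, hy] at hy1
    exact hpre0 y (hpV n y hy) hy1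

end Lift

section Minimality

variable [TopologicalSpace X] {α : X → X} {Δ : Set X}

theorem minimal_of_extension_minimal
    (h : ∀ U : Set (ℕ → X ⊕ Unit), U ⊆ Xtilde α Δ →
      IsClosed (Subtype.val ⁻¹' U : Set (Xtilde α Δ)) →
      PdsInvariant (tShift α) (tDelta1 α Δ) U → U = ∅ ∨ U = Xtilde α Δ) :
    ∀ V : Set X, IsClosed V → PdsInvariant α Δ V → V = ∅ ∨ V = univ := by
  intro V hVc hV
  refine (h _ (fun _ hp => hp.1) (isClosed_liftSet hVc) (pdsInvariant_liftSet hV)).imp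
    (fun he => eq_empty_of_forall_notMem fun x hx => ?_) fun he => eq_univ_of_forall fun x => ?_
  · obtain ⟨p, hp, -⟩ := exists_mem_liftSet (image_inter_subset_of_pdsInvariant hV) hx
    exact he.subset hp
  · obtain ⟨p, ⟨hp, -⟩, h0⟩ := exists_mem_liftSet (V := univ) (α := α) (Δ := Δ) (by simp)
      (mem_univ x)
    rw [← he] at hp
    exact hp.2 0 x h0

variable [T2Space X]

lemma headSet_eq_univ_of_pdsDom_eq_empty
    (hmin : ∀ V : Set X, IsClosed V → PdsInvariant α Δ V → V = ∅ ∨ V = univ)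
    {U : Set (ℕ → X ⊕ Unit)} (hU : PdsInvariant (tShift α) (tDelta1 α Δ) U)
    (hsub : U ⊆ Xtilde α Δ) {q₀ : ℕ → X ⊕ Unit} (hq₀ : q₀ ∈ U) {n₀ : ℕ}
    (hn₀ : pdsDom α Δ n₀ = ∅) : headSet U = univ := by
  have hq₀X := hsub hq₀
  obtain ⟨x₀, -⟩ := Xtilde.exists_head hq₀X
  obtain ⟨t, ht⟩ : ∃ t, t ∉ Δ := by
    by_contra! hΔ
    rw [eq_univ_of_forall hΔ, pdsDom_univ] at hn₀
    exact notMem_empty x₀ (hn₀ ▸ mem_univ x₀)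
  obtain ⟨d, ⟨z, hz, rfl⟩, hdepth⟩ := Nat.exists_and_not_succ
    (P := fun m => t ∈ α^[m] '' pdsDom α Δ m) (n := n₀) ⟨t, trivial, rfl⟩ (by simp [hn₀])
  have horbit := (hmin _ ((finite_Iic d).image _).isClosed
    (pdsInvariant_orbit_segment hz ht hdepth)).resolve_left
    (Nonempty.ne_empty ⟨z, 0, Nat.zero_le d, rfl⟩)
  have hq₀n₀ : q₀ n₀ = pdsZero X := by
    rcases h : q₀ n₀ with x | ⟨⟩
    · exact absurd (hn₀ ▸ Xtilde.mem_pdsDom hq₀X h) (notMem_empty x)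
    · rfl
  obtain ⟨k, r, hr, hr1⟩ := Xtilde.exists_last hq₀X hq₀n₀
  obtain ⟨j, hj, rfl⟩ := horbit ▸ mem_univ r
  have hzr := eq_of_iterate_eq_of_notMem_image (pdsDom_antitone hj hz)
    (Xtilde.notMem_image hq₀X hr hr1) rfl
  have hz_head : z ∈ headSet U := hzr ▸ mem_headSet_of_apply_eq_inl hU hsub hq₀ hr
  refine eq_univ_of_forall fun x => ?_
  obtain ⟨i, hi, rfl⟩ := horbit ▸ mem_univ x
  exact iterate_mem_headSet hU hsub hz_head (pdsDom_antitone hi hz)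

variable [CompactSpace X]

lemma image_eq_univ_of_minimal
    (hmin : ∀ V : Set X, IsClosed V → PdsInvariant α Δ V → V = ∅ ∨ V = univ)
    (hΔ : IsClosed Δ) (hα : ContinuousOn α Δ) (hne : ∀ n, (pdsDom α Δ n).Nonempty) :
    α '' Δ = univ := by
  have hZ := (hmin _ (isClosed_iInter (isClosed_image_pdsDom hΔ hα))
    (pdsInvariant_iInter_image_pdsDom hΔ hα)).resolve_left
    (iInter_image_pdsDom_nonempty hΔ hα hne).ne_empty
  refine eq_univ_of_forall fun x => ?_
  obtain ⟨u, hu, rfl⟩ := mem_iInter.1 (hZ ▸ mem_univ x) 1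
  exact ⟨u, hu.1, rfl⟩

theorem extension_minimal_of_minimal (hΔ : IsClosed Δ) (hα : ContinuousOn α Δ)
    (hopen : IsOpen (α '' Δ))
    (hmin : ∀ V : Set X, IsClosed V → PdsInvariant α Δ V → V = ∅ ∨ V = univ) :
    ∀ U : Set (ℕ → X ⊕ Unit), U ⊆ Xtilde α Δ →
      IsClosed (Subtype.val ⁻¹' U : Set (Xtilde α Δ)) →
      PdsInvariant (tShift α) (tDelta1 α Δ) U → U = ∅ ∨ U = Xtilde α Δ := by
  intro U hsub hclosed hU
  refine U.eq_empty_or_nonempty.imp_right fun ⟨q₀, hq₀⟩ =>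
    eq_Xtilde_of_headSet_eq_univ hU hsub hclosed ?_
  by_cases hne : ∀ n, (pdsDom α Δ n).Nonempty
  · obtain ⟨x₀, h₀⟩ := Xtilde.exists_head (hsub hq₀)
    exact (hmin _ (isClosed_headSet (isClosed_Xtilde hΔ hα hopen) hsub hclosed)
      (pdsInvariant_headSet hU hsub (image_eq_univ_of_minimal hmin hΔ hα hne))).resolve_left
      (Nonempty.ne_empty ⟨x₀, q₀, hq₀, h₀⟩)
  · push Not at hne
    obtain ⟨n₀, hn₀⟩ := hne
    exact headSet_eq_univ_of_pdsDom_eq_empty hmin hU hsub hq₀ hn₀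

end Minimality

/-- A partial dynamical system `(X, α)` with `Δ₋₁` open is minimal iff its
reversible extension `(X̃, α̃)` is minimal. -/
theorem minimal_iff_extension_minimal {X : Type*} [TopologicalSpace X] [CompactSpace X]
    [T2Space X] (Δ : Set X) (hΔ : IsClopen Δ) (α : X → X) (hα : ContinuousOn α Δ)
    (hopen : IsOpen (α '' Δ)) :
    (∀ V : Set X, IsClosed V → PdsInvariant α Δ V → V = ∅ ∨ V = Set.univ) ↔
    (∀ U' : Set (ℕ → X ⊕ Unit), U' ⊆ Xtilde α Δ →
      IsClosed (Subtype.val ⁻¹' U' : Set ↥(Xtilde α Δ)) →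
      PdsInvariant (tShift α) (tDelta1 α Δ) U' →
      U' = ∅ ∨ U' = Xtilde α Δ) :=
  ⟨extension_minimal_of_minimal hΔ.isClosed hα hopen, minimal_of_extension_minimal⟩
end
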